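/- Let p ∈ [2,∞] and q ∈ [1,∞] with 2/p + 2/q = 1, and let g ∈ L^p(Ω,μ). Define G(x) ∈ ℝ^m by G(x)_i = g(x⁽ⁱ⁾). If K_q(Γ) < ∞, then E‖R(X)G(X)‖₂² ≤ n · m² · K_q(Γ) · ‖g‖²_{L^p(Ω)}. -/

import Mathlib

/-!
Put `A = Γ(x)`, `G = G(x)` and `v = R(x) G`. The normal equations `AᵀA v = AᵀG` make `A v` the
orthogonal projection of `G` onto the range of `A`, so `s₁(A) ‖v‖² ≤ ‖A v‖² ≤ ‖G‖²`, i.e.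
`‖R(x) G(x)‖² ≤ s₁(Γ(x))⁻¹ ∑ᵢ g(x⁽ⁱ⁾)²`. Hölder's inequality with exponents `q/2` and `p/2`,
then the triangle inequality in `L^{p/2}` for the `m` summands (each of norm `‖g‖²_p`),
bound the expectation by `m K_q(Γ) ‖g‖²_p ≤ n m² K_q(Γ) ‖g‖²_p`.
Measurability of `s₁ ∘ Γ` holds because `s₁(A)` is the minimum of `‖A v‖²` over the unit sphere,
hence continuous in `A`.
-/

open MeasureTheory ProbabilityTheory ENNReal Matrix Filter

noncomputable section

/-- The smallest eigenvalue `s₁(A)` of the symmetric positive semidefinite matrix `AᵀA`. -/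
def s1 {m n : ℕ} (A : Matrix (Fin m) (Fin n) ℝ) : ℝ :=
  ⨅ i, (show (Aᵀ * A).IsHermitian from Matrix.isHermitian_conjTranspose_mul_self A).eigenvalues i

/-- Euclidean norm on `ℝ^n`. -/
def enorm2 {n : ℕ} (v : Fin n → ℝ) : ℝ := Real.sqrt (∑ j, v j ^ 2)

/-- The matrix `Γ(x)` with entries `Γ(x)_{ij} = γ_j(x⁽ⁱ⁾)`. -/
def dmat {Ω : Type*} {n m : ℕ} (γ : Fin n → Ω → ℝ) (x : Fin m → Ω) :
    Matrix (Fin m) (Fin n) ℝ := Matrix.of fun i j => γ j (x i)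

/-- The matrix `R(x) = (Γ(x)ᵀΓ(x))⁻¹Γ(x)ᵀ`. -/
def Rmat {Ω : Type*} {n m : ℕ} (γ : Fin n → Ω → ℝ) (x : Fin m → Ω) :
    Matrix (Fin n) (Fin m) ℝ := ((dmat γ x)ᵀ * dmat γ x)⁻¹ * (dmat γ x)ᵀ

/-- `β(x) = R(x) F(x)` where `F(x)_i = f(x⁽ⁱ⁾)`. -/
def betaFn {Ω : Type*} {n m : ℕ} (γ : Fin n → Ω → ℝ) (f : Ω → ℝ) (x : Fin m → Ω) :
    Fin n → ℝ := Rmat γ x *ᵥ fun i => f (x i)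

/-- The residue `ρ(a)(ω) = f(ω) - ∑ j a_j γ_j(ω)`. -/
def resid {Ω : Type*} {n : ℕ} (γ : Fin n → Ω → ℝ) (f : Ω → ℝ) (a : Fin n → ℝ) : Ω → ℝ :=
  fun ω => f ω - ∑ j, a j * γ j ω

namespace Matrix

variable {ι κ : Type*} [Fintype κ]

theorem IsHermitian.mul_dotProduct_self_le [Fintype ι] [DecidableEq ι] {M : Matrix ι ι ℝ}
    (hM : M.IsHermitian) {c : ℝ} (hc : ∀ i, c ≤ hM.eigenvalues i) (v : ι → ℝ) :
    c * (v ⬝ᵥ v) ≤ v ⬝ᵥ (M *ᵥ v) := by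
  have hpsd : (M - algebraMap ℝ _ c).PosSemidef := by
    refine posSemidef_iff_isHermitian_and_spectrum_nonneg.mpr
      ⟨hM.sub (IsSelfAdjoint.algebraMap _ (IsSelfAdjoint.all c)), ?_⟩
    rw [← spectrum.sub_singleton_eq, hM.spectrum_real_eq_range_eigenvalues]
    rintro _ ⟨_, ⟨i, rfl⟩, _, rfl, rfl⟩
    exact sub_nonneg.mpr (hc i)
  have := hpsd.dotProduct_mulVec_nonneg v
  rw [Algebra.algebraMap_eq_smul_one, sub_mulVec, smul_mulVec, one_mulVec, dotProduct_sub,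
    dotProduct_smul, smul_eq_mul, star_trivial] at this
  linarith

theorem isHermitian_transpose_mul_self (A : Matrix κ ι ℝ) : (Aᵀ * A).IsHermitian :=
  isHermitian_conjTranspose_mul_self A

theorem posSemidef_transpose_mul_self [Fintype ι] (A : Matrix κ ι ℝ) : (Aᵀ * A).PosSemidef :=
  posSemidef_conjTranspose_mul_self A

theorem dotProduct_transpose_mul_self_mulVec [Fintype ι] (A : Matrix κ ι ℝ) (v : ι → ℝ) :
    v ⬝ᵥ ((Aᵀ * A) *ᵥ v) = (A *ᵥ v) ⬝ᵥ (A *ᵥ v) := by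
  rw [← mulVec_mulVec, dotProduct_mulVec, vecMul_transpose]

theorem mulVec_dotProduct_self_le_of_transpose_mulVec_eq [Fintype ι] {A : Matrix κ ι ℝ}
    {v : ι → ℝ} {G : κ → ℝ} (h : Aᵀ *ᵥ (A *ᵥ v) = Aᵀ *ᵥ G) : (A *ᵥ v) ⬝ᵥ (A *ᵥ v) ≤ G ⬝ᵥ G := by
  have hadj : ∀ u, (A *ᵥ v) ⬝ᵥ u = v ⬝ᵥ (Aᵀ *ᵥ u) := fun u => by
    rw [dotProduct_mulVec, vecMul_transpose]
  set w := A *ᵥ v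
  have hwG : w ⬝ᵥ w = w ⬝ᵥ G := by rw [hadj, h, ← hadj]
  -- `G ⬝ᵥ G - w ⬝ᵥ w = (G - w) ⬝ᵥ (G - w)` once `w ⬝ᵥ G = w ⬝ᵥ w`
  have : 0 ≤ (G - w) ⬝ᵥ (G - w) := Finset.sum_nonneg fun i _ => mul_self_nonneg _
  simp only [sub_dotProduct, dotProduct_sub, dotProduct_comm G w] at this
  linarith

end Matrix

theorem enorm2_nonneg {n : ℕ} (v : Fin n → ℝ) : 0 ≤ enorm2 v := Real.sqrt_nonneg _

theorem enorm2_sq {n : ℕ} (v : Fin n → ℝ) : enorm2 v ^ 2 = v ⬝ᵥ v := by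
  rw [enorm2, Real.sq_sqrt (by positivity)]
  simp [dotProduct, sq]

section s1

variable {m n : ℕ}

theorem s1_le_eigenvalues (A : Matrix (Fin m) (Fin n) ℝ) (i : Fin n) :
    s1 A ≤ (isHermitian_transpose_mul_self A).eigenvalues i :=
  ciInf_le (Finite.bddBelow_range _) i

theorem exists_eigenvalues_eq_s1 [NeZero n] (A : Matrix (Fin m) (Fin n) ℝ) :
    ∃ i, (isHermitian_transpose_mul_self A).eigenvalues i = s1 A :=
  exists_eq_ciInf_of_finite

theorem s1_mul_dotProduct_self_le (A : Matrix (Fin m) (Fin n) ℝ) (v : Fin n → ℝ) :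
    s1 A * (v ⬝ᵥ v) ≤ (A *ᵥ v) ⬝ᵥ (A *ᵥ v) := by
  calc s1 A * (v ⬝ᵥ v) ≤ v ⬝ᵥ ((Aᵀ * A) *ᵥ v) :=
        (isHermitian_transpose_mul_self A).mul_dotProduct_self_le (s1_le_eigenvalues A) v
    _ = (A *ᵥ v) ⬝ᵥ (A *ᵥ v) := dotProduct_transpose_mul_self_mulVec A v

theorem s1_pos [NeZero n] {A : Matrix (Fin m) (Fin n) ℝ} (hA : IsUnit (Aᵀ * A).det) :
    0 < s1 A := by
  have hpd : (Aᵀ * A).PosDef :=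
    (posSemidef_transpose_mul_self A).posDef_iff_isUnit.mpr ((isUnit_iff_isUnit_det _).mpr hA)
  obtain ⟨i, hi⟩ := exists_eigenvalues_eq_s1 A
  exact hi ▸ hpd.eigenvalues_pos i

theorem enorm2_sq_pinv_mulVec_le [NeZero n] {A : Matrix (Fin m) (Fin n) ℝ}
    (hA : IsUnit (Aᵀ * A).det) (G : Fin m → ℝ) :
    enorm2 (((Aᵀ * A)⁻¹ * Aᵀ) *ᵥ G) ^ 2 ≤ (s1 A)⁻¹ * ∑ i, G i ^ 2 := by
  set v := ((Aᵀ * A)⁻¹ * Aᵀ) *ᵥ G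
  have hnormal : Aᵀ *ᵥ (A *ᵥ v) = Aᵀ *ᵥ G := by
    rw [mulVec_mulVec, mulVec_mulVec, mul_nonsing_inv_cancel_left _ _ hA]
  have hG : ∑ i, G i ^ 2 = G ⬝ᵥ G := by simp [dotProduct, sq]
  rw [enorm2_sq, hG, inv_mul_eq_div, le_div_iff₀ (s1_pos hA), mul_comm]
  exact (s1_mul_dotProduct_self_le A v).trans
    (mulVec_dotProduct_self_le_of_transpose_mulVec_eq hnormal)

theorem s1_eq_sInf_sphere [NeZero n] (A : Matrix (Fin m) (Fin n) ℝ) :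
    s1 A = sInf ((fun v : EuclideanSpace ℝ (Fin n) => (A *ᵥ v.ofLp) ⬝ᵥ (A *ᵥ v.ofLp)) ''
      Metric.sphere 0 1) := by
  have hunit : ∀ v ∈ Metric.sphere (0 : EuclideanSpace ℝ (Fin n)) 1, v.ofLp ⬝ᵥ v.ofLp = 1 := by
    intro v hv
    rw [mem_sphere_zero_iff_norm] at hv
    have := real_inner_self_eq_norm_sq v
    rwa [EuclideanSpace.inner_eq_star_dotProduct, hv, star_trivial, one_pow] at this
  refine (IsLeast.csInf_eq ⟨?_, ?_⟩).symm
  · obtain ⟨i, hi⟩ := exists_eigenvalues_eq_s1 A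
    set hM := isHermitian_transpose_mul_self A
    have hu : hM.eigenvectorBasis i ∈ Metric.sphere 0 1 := by
      simp [hM.eigenvectorBasis.orthonormal.1 i]
    refine ⟨hM.eigenvectorBasis i, hu, ?_⟩
    beta_reduce
    rw [← dotProduct_transpose_mul_self_mulVec, hM.mulVec_eigenvectorBasis, dotProduct_smul,
      hunit _ hu, smul_eq_mul, mul_one, hi]
  · rintro _ ⟨v, hv, rfl⟩
    simpa [hunit v hv] using s1_mul_dotProduct_self_le A v.ofLp

theorem continuous_s1 : Continuous (s1 : Matrix (Fin m) (Fin n) ℝ → ℝ) := by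
  rcases Nat.eq_zero_or_pos n with rfl | hn
  · exact continuous_of_const fun A B => congrArg s1 (Matrix.ext fun _ j => j.elim0)
  have : NeZero n := .of_pos hn
  rw [show s1 = _ from funext (s1_eq_sInf_sphere (m := m))]
  exact (isCompact_sphere 0 1).continuous_sInf (by fun_prop)

theorem measurable_s1_dmat {Ω : Type*} [MeasurableSpace Ω] {γ : Fin n → Ω → ℝ}
    (hγ : ∀ j, Measurable (γ j)) : Measurable fun x : Fin m → Ω => s1 (dmat γ x) := by
  have hs1 : Continuous fun M : Fin m → Fin n → ℝ => s1 (Matrix.of M) := continuous_s1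
  exact hs1.measurable.comp (measurable_pi_lambda _ fun i => measurable_pi_lambda _ fun j =>
    (hγ j).comp (measurable_pi_apply i))

end s1

theorem ENNReal.holderTriple_div_two {p q : ℝ≥0∞} (hpq : 2 / p + 2 / q = 1) :
    HolderTriple (q / 2) (p / 2) 1 := ⟨by
  rw [ENNReal.inv_div (.inl ofNat_ne_top) (.inl two_ne_zero),
    ENNReal.inv_div (.inl ofNat_ne_top) (.inl two_ne_zero), add_comm, hpq, inv_one]⟩

section Lp

variable {Ω : Type*} [MeasurableSpace Ω] {μ : Measure Ω}

theorem eLpNorm_sq_div_two (g : Ω → ℝ) (p : ℝ≥0∞) :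
    eLpNorm (fun ω => g ω ^ 2) (p / 2) μ = eLpNorm g p μ ^ 2 := by
  have h := eLpNorm_norm_rpow g (p := p / 2) (μ := μ) two_pos
  rw [ENNReal.ofReal_ofNat, ENNReal.div_mul_cancel two_ne_zero ofNat_ne_top, ENNReal.rpow_two] at h
  rw [← h]
  congr 1 with ω
  simp [sq_abs]

theorem eLpNorm_sum_sq_comp_eval_le {ι : Type*} [Fintype ι] [IsProbabilityMeasure μ]
    {g : Ω → ℝ} (hg : Measurable g) {p : ℝ≥0∞} (hp : 2 ≤ p) :
    eLpNorm (fun x : ι → Ω => ∑ i, g (x i) ^ 2) (p / 2) (Measure.pi fun _ => μ)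
      ≤ Fintype.card ι * eLpNorm g p μ ^ 2 := by
  have hp2 : 1 ≤ p / 2 := by
    rwa [ENNReal.le_div_iff_mul_le (.inl two_ne_zero) (.inl ENNReal.ofNat_ne_top), one_mul]
  have hterm : ∀ i, eLpNorm (fun x : ι → Ω => g (x i) ^ 2) (p / 2) (Measure.pi fun _ => μ)
      = eLpNorm g p μ ^ 2 := fun i => by
    rw [← eLpNorm_sq_div_two g p]
    exact eLpNorm_comp_measurePreserving (g := fun ω => g ω ^ 2)
      (hg.pow_const 2).aestronglyMeasurable (measurePreserving_eval _ i)
  calc eLpNorm (fun x : ι → Ω => ∑ i, g (x i) ^ 2) (p / 2) (Measure.pi fun _ => μ)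
      ≤ ∑ i, eLpNorm (fun x : ι → Ω => g (x i) ^ 2) (p / 2) (Measure.pi fun _ => μ) := by
        simpa [Finset.sum_fn] using eLpNorm_sum_le (fun i _ =>
          ((hg.comp (measurable_pi_apply i)).pow_const 2).aestronglyMeasurable) hp2
    _ = Fintype.card ι * eLpNorm g p μ ^ 2 := by simp [hterm]

end Lp

theorem stmt1_general {Ω : Type*} [MeasurableSpace Ω] (μ : Measure Ω) [IsProbabilityMeasure μ]
    (n m : ℕ) (hn : 1 ≤ n)
    (γ : Fin n → Ω → ℝ) (hγ : ∀ j, Measurable (γ j))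
    (hinv : ∀ᵐ x ∂(Measure.pi fun _ : Fin m => μ), IsUnit ((dmat γ x)ᵀ * dmat γ x).det)
    (p q : ℝ≥0∞) (hp : 2 ≤ p) (hpq : 2 / p + 2 / q = 1)
    (g : Ω → ℝ) (hgm : Measurable g) :
    ∫⁻ x, ENNReal.ofReal (enorm2 (Rmat γ x *ᵥ fun i => g (x i))) ^ 2
        ∂(Measure.pi fun _ : Fin m => μ)
      ≤ n * m ^ 2 *
        eLpNorm (fun x : Fin m → Ω => (s1 (dmat γ x))⁻¹) (q / 2)
          (Measure.pi fun _ : Fin m => μ) *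
        eLpNorm g p μ ^ 2 := by
  have : NeZero n := .of_pos hn
  set ν := Measure.pi fun _ : Fin m => μ
  set K := fun x : Fin m → Ω => (s1 (dmat γ x))⁻¹
  set S := fun x : Fin m → Ω => ∑ i, g (x i) ^ 2
  have hpointwise : ∀ᵐ x ∂ν,
      ENNReal.ofReal (enorm2 (Rmat γ x *ᵥ fun i => g (x i))) ^ 2 ≤ ‖(K • S) x‖ₑ := by
    filter_upwards [hinv] with x hx
    rw [← ENNReal.ofReal_pow (enorm2_nonneg _), Real.enorm_eq_ofReal_abs]
    exact ENNReal.ofReal_le_ofReal ((enorm2_sq_pinv_mulVec_le hx _).trans (le_abs_self _))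
  have : HolderTriple (q / 2) (p / 2) 1 := holderTriple_div_two hpq
  have hKS : eLpNorm (K • S) 1 ν ≤ eLpNorm K (q / 2) ν * eLpNorm S (p / 2) ν :=
    eLpNorm_smul_le_mul_eLpNorm
      (Finset.measurable_sum _ fun i _ =>
        (hgm.comp (measurable_pi_apply i)).pow_const 2).aestronglyMeasurable
      (measurable_s1_dmat hγ).inv.aestronglyMeasurable
  have hm : (m : ℝ≥0∞) ≤ n * m ^ 2 := by
    exact_mod_cast (Nat.le_mul_self m).trans (Nat.le_mul_of_pos_left _ hn) |>.trans_eq (by ring)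
  calc _ ≤ ∫⁻ x, ‖(K • S) x‖ₑ ∂ν := lintegral_mono_ae hpointwise
    _ = eLpNorm (K • S) 1 ν := eLpNorm_one_eq_lintegral_enorm.symm
    _ ≤ eLpNorm K (q / 2) ν * (m * eLpNorm g p μ ^ 2) :=
        hKS.trans (by gcongr; simpa using eLpNorm_sum_sq_comp_eval_le (ι := Fin m) hgm hp)
    _ = m * (eLpNorm K (q / 2) ν * eLpNorm g p μ ^ 2) := by ring
    _ ≤ n * m ^ 2 * (eLpNorm K (q / 2) ν * eLpNorm g p μ ^ 2) := by gcongr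
    _ = n * m ^ 2 * eLpNorm K (q / 2) ν * eLpNorm g p μ ^ 2 := by ring

/-- Lemma 1 (b): for `p ∈ [2,∞]`, `2/p + 2/q = 1` and `g ∈ L^p(Ω,μ)`,
if `K_q(Γ) < ∞` then `E‖R(X)G(X)‖₂² ≤ n ⬝ m² ⬝ K_q(Γ) ⬝ ‖g‖²_{L^p(Ω)}`, where
`K_q(Γ) = (E[s₁(Γ(X))^{-q/2}])^{2/q} = ‖s₁(Γ(X))⁻¹‖_{L^{q/2}}`. -/
theorem stmt1 {Ω : Type*} [MeasurableSpace Ω] (μ : Measure Ω) [IsProbabilityMeasure μ]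
    (n m : ℕ) (hn : 1 ≤ n) (hm : 1 ≤ m)
    (γ : Fin n → Ω → ℝ) (hγ : ∀ j, Measurable (γ j))
    (f : Ω → ℝ) (hf : Measurable f)
    (hinv : ∀ᵐ x ∂(Measure.pi fun _ : Fin m => μ), IsUnit ((dmat γ x)ᵀ * dmat γ x).det)
    (p q : ℝ≥0∞) (hp : 2 ≤ p) (hq : 1 ≤ q) (hpq : 2 / p + 2 / q = 1)
    (g : Ω → ℝ) (hgm : Measurable g) (hg : MemLp g p μ)
    (hK : eLpNorm (fun x : Fin m → Ω => (s1 (dmat γ x))⁻¹) (q / 2)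
        (Measure.pi fun _ : Fin m => μ) < ⊤) :
    ∫⁻ x, ENNReal.ofReal (enorm2 (Rmat γ x *ᵥ fun i => g (x i))) ^ 2
        ∂(Measure.pi fun _ : Fin m => μ)
      ≤ n * m ^ 2 *
        eLpNorm (fun x : Fin m → Ω => (s1 (dmat γ x))⁻¹) (q / 2)
          (Measure.pi fun _ : Fin m => μ) *
        eLpNorm g p μ ^ 2 :=
  stmt1_general μ n m hn γ hγ hinv p q hp hpq g hgm
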